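/- If a graph G has no perfect matching and G is interval colorable, then w(G) ≥ max{Δ(G), 2δ(G)}. -/

import Mathlib

open scoped Classical

/-- A proper edge-coloring: distinct edges sharing a vertex receive distinct colors. -/
def IsProperEdgeColoring {V : Type*} (G : SimpleGraph V) (c : Sym2 V → ℕ) : Prop :=
  ∀ e ∈ G.edgeSet, ∀ e' ∈ G.edgeSet, e ≠ e' → (∃ v, v ∈ e ∧ v ∈ e') → c e ≠ c e'

/-- A proper `t`-edge-coloring: proper, colors lie in `{1,…,t}`, and all colors are used. -/
def IsProperTEdgeColoring {V : Type*} (G : SimpleGraph V) (t : ℕ) (c : Sym2 V → ℕ) : Prop :=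
  IsProperEdgeColoring G c ∧ (∀ e ∈ G.edgeSet, c e ∈ Finset.Icc 1 t) ∧
    ∀ k ∈ Finset.Icc 1 t, ∃ e ∈ G.edgeSet, c e = k

/-- The vSpectrum of a vertex: the set of colors appearing on edges incident to `v`. -/
noncomputable def vSpectrum {V : Type*} [Fintype V] (G : SimpleGraph V) (c : Sym2 V → ℕ)
    (v : V) : Finset ℕ :=
  (Finset.univ.filter (fun u => G.Adj v u)).image (fun u => c s(v, u))

/-- The deficiency of a finite set of naturals: `max S − min S − |S| + 1`. -/
def setDef (S : Finset ℕ) : ℕ := (S.max.getD 0 - S.min.getD 0) - (S.card - 1)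

/-- The deficiency of a proper edge-coloring: the sum of vertex deficiencies. -/
noncomputable def colDef {V : Type*} [Fintype V] (G : SimpleGraph V) (c : Sym2 V → ℕ) : ℕ :=
  ∑ v, setDef (vSpectrum G c v)

/-- The deficiency of a graph: the minimum deficiency over all proper edge-colorings. -/
noncomputable def graphDef {V : Type*} [Fintype V] (G : SimpleGraph V) : ℕ :=
  sInf {d | ∃ c, IsProperEdgeColoring G c ∧ colDef G c = d}

/-- `w_def G`: the least `t` such that some proper `t`-edge-coloring attains `def(G)`. -/
noncomputable def wdef {V : Type*} [Fintype V] (G : SimpleGraph V) : ℕ :=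
  sInf {t | ∃ c, IsProperTEdgeColoring G t c ∧ colDef G c = graphDef G}

/-- `W_def G`: the greatest `t` such that some proper `t`-edge-coloring attains `def(G)`. -/
noncomputable def Wdef {V : Type*} [Fintype V] (G : SimpleGraph V) : ℕ :=
  sSup {t | ∃ c, IsProperTEdgeColoring G t c ∧ colDef G c = graphDef G}

/-- A graph is interval colorable if some proper edge-coloring has deficiency `0`. -/
def IntervalColorable {V : Type*} [Fintype V] (G : SimpleGraph V) : Prop :=
  ∃ c, IsProperEdgeColoring G c ∧ colDef G c = 0

/-- `w G`: the least `t` such that `G` has an interval `t`-coloring. -/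
noncomputable def wint {V : Type*} [Fintype V] (G : SimpleGraph V) : ℕ :=
  sInf {t | ∃ c, IsProperTEdgeColoring G t c ∧ colDef G c = 0}

/-- `W G`: the greatest `t` such that `G` has an interval `t`-coloring. -/
noncomputable def Wint {V : Type*} [Fintype V] (G : SimpleGraph V) : ℕ :=
  sSup {t | ∃ c, IsProperTEdgeColoring G t c ∧ colDef G c = 0}

/-!
Relabelling the colors of an interval coloring by their rank among all colors in use closes the
gaps between them and keeps every spectrum an interval, so an interval colorable graph has
interval `t`-colorings and `w(G)` is a genuine minimum. In an interval `t`-coloring the spectrum of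
`v` is a run of `deg v ≥ δ` consecutive colors inside `{1, …, t}`, whence `Δ ≤ t`; and if `t < 2δ`
every such run contains the color `δ`, so the edges of color `δ` form a perfect matching.
-/

open Finset

lemma setDef_eq_of_nonempty {S : Finset ℕ} (hS : S.Nonempty) :
    setDef S = (S.max' hS - S.min' hS) - (#S - 1) := by
  rw [setDef, ← coe_max' hS, ← coe_min' hS]
  rfl

lemma setDef_Icc (a b : ℕ) : setDef (Icc a b) = 0 := by
  rcases le_or_gt a b with hab | hab
  · have hne : (Icc a b).Nonempty := nonempty_Icc.2 hab
    have hmax : (Icc a b).max' hne = b :=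
      (max'_eq_iff _ _ _).2 ⟨mem_Icc.2 ⟨hab, le_rfl⟩, fun _ hx => (mem_Icc.1 hx).2⟩
    have hmin : (Icc a b).min' hne = a :=
      (min'_eq_iff _ _ _).2 ⟨mem_Icc.2 ⟨le_rfl, hab⟩, fun _ hx => (mem_Icc.1 hx).1⟩
    rw [setDef_eq_of_nonempty hne, hmax, hmin, Nat.card_Icc]
    omega
  · rw [Icc_eq_empty_of_lt hab]
    rfl

lemma setDef_eq_zero_iff {S : Finset ℕ} : setDef S = 0 ↔ ∃ a b, S = Icc a b := by
  refine ⟨fun h0 => ?_, fun ⟨a, b, hS⟩ => hS ▸ setDef_Icc a b⟩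
  rcases S.eq_empty_or_nonempty with rfl | hS
  · exact ⟨1, 0, rfl⟩
  refine ⟨S.min' hS, S.max' hS, eq_of_subset_of_card_le
    (fun x hx => mem_Icc.2 ⟨min'_le _ _ hx, le_max' _ _ hx⟩) ?_⟩
  have hminmax : S.min' hS ≤ S.max' hS := min'_le_max' S hS
  have hcard : 0 < #S := card_pos.2 hS
  rw [setDef_eq_of_nonempty hS] at h0
  rw [Nat.card_Icc]
  omega

lemma mem_of_setDef_eq_zero {S : Finset ℕ} {t d : ℕ} (hS : S ⊆ Icc 1 t) (h0 : setDef S = 0)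
    (hd : d ≤ #S) (ht : t < 2 * d) : d ∈ S := by
  obtain ⟨a, b, rfl⟩ := setDef_eq_zero_iff.1 h0
  rw [Nat.card_Icc] at hd
  have ha := mem_Icc.1 (hS (mem_Icc.2 ⟨le_rfl, by omega⟩))
  have hb := mem_Icc.1 (hS (mem_Icc.2 ⟨by omega, le_rfl⟩))
  exact mem_Icc.2 ⟨by omega, by omega⟩

def rankIn (U : Finset ℕ) (k : ℕ) : ℕ := #(U.filter (· ≤ k))

lemma rankIn_mono (U : Finset ℕ) : Monotone (rankIn U) := fun _ _ h =>
  card_le_card (monotone_filter_right U fun _ _ hx => hx.trans h)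

lemma rankIn_strictMonoOn (U : Finset ℕ) : StrictMonoOn (rankIn U) U := by
  intro j _ k hk hjk
  refine card_lt_card ((ssubset_iff_of_subset ?_).2 ⟨k, mem_filter.2 ⟨hk, le_rfl⟩, ?_⟩)
  · exact monotone_filter_right U fun _ _ hx => hx.trans hjk.le
  · exact fun hk' => (mem_filter.1 hk').2.not_gt hjk

lemma rankIn_mem_Icc {U : Finset ℕ} {k : ℕ} (hk : k ∈ U) : rankIn U k ∈ Icc 1 #U :=
  mem_Icc.2 ⟨card_pos.2 ⟨k, mem_filter.2 ⟨hk, le_rfl⟩⟩, card_le_card (filter_subset _ _)⟩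

lemma image_rankIn (U : Finset ℕ) : U.image (rankIn U) = Icc 1 #U :=
  eq_of_subset_of_card_le (image_subset_iff.2 fun _ => rankIn_mem_Icc)
    (by rw [Nat.card_Icc, card_image_of_injOn (rankIn_strictMonoOn U).injOn]; omega)

lemma rankIn_eq_add_of_Icc_subset {U : Finset ℕ} {a b : ℕ} (hab : a ≤ b) (hsub : Icc a b ⊆ U) :
    rankIn U b = rankIn U a + (b - a) := by
  have hsplit : U.filter (· ≤ b) = U.filter (· ≤ a) ∪ Ioc a b := by
    ext x
    simp only [mem_filter, mem_union, mem_Ioc]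
    constructor
    · rintro ⟨hxU, hxb⟩
      exact (le_or_gt x a).imp (⟨hxU, ·⟩) (⟨·, hxb⟩)
    · rintro (⟨hxU, hxa⟩ | ⟨hax, hxb⟩)
      · exact ⟨hxU, hxa.trans hab⟩
      · exact ⟨hsub (mem_Icc.2 ⟨hax.le, hxb⟩), hxb⟩
  have hdisj : Disjoint (U.filter (· ≤ a)) (Ioc a b) :=
    disjoint_left.2 fun _ hx hx' => (mem_filter.1 hx).2.not_gt (mem_Ioc.1 hx').1
  rw [rankIn, hsplit, card_union_of_disjoint hdisj, Nat.card_Ioc, rankIn]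

lemma image_rankIn_Icc {U : Finset ℕ} {a b : ℕ} (hab : a ≤ b) (hsub : Icc a b ⊆ U) :
    (Icc a b).image (rankIn U) = Icc (rankIn U a) (rankIn U b) := by
  refine eq_of_subset_of_card_le (image_subset_iff.2 fun x hx => ?_) ?_
  · exact mem_Icc.2 ⟨rankIn_mono U (mem_Icc.1 hx).1, rankIn_mono U (mem_Icc.1 hx).2⟩
  · rw [card_image_of_injOn ((rankIn_strictMonoOn U).injOn.mono (coe_subset.2 hsub)),
      Nat.card_Icc, Nat.card_Icc, rankIn_eq_add_of_Icc_subset hab hsub]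
    omega

lemma setDef_image_rankIn {U S : Finset ℕ} (hS : S ⊆ U) (h0 : setDef S = 0) :
    setDef (S.image (rankIn U)) = 0 := by
  obtain ⟨a, b, rfl⟩ := setDef_eq_zero_iff.1 h0
  rcases le_or_gt a b with hab | hab
  · rw [image_rankIn_Icc hab hS]
    exact setDef_Icc _ _
  · rw [Icc_eq_empty_of_lt hab, image_empty]
    rfl

section Coloring

variable {V : Type*} {G : SimpleGraph V} {c : Sym2 V → ℕ}

namespace IsProperEdgeColoring

lemma ne_of_adj (hc : IsProperEdgeColoring G c) {v u w : V} (hu : G.Adj v u) (hw : G.Adj v w)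
    (huw : u ≠ w) : c s(v, u) ≠ c s(v, w) :=
  hc _ hu _ hw (fun h => huw (Sym2.congr_right.1 h)) ⟨v, Sym2.mem_mk_left v u, Sym2.mem_mk_left v w⟩

lemma comp (hc : IsProperEdgeColoring G c) {f : ℕ → ℕ} (hf : Set.InjOn f (c '' G.edgeSet)) :
    IsProperEdgeColoring G (f ∘ c) := fun e he e' he' hne hshare hfc =>
  hc e he e' he' hne hshare (hf ⟨e, he, rfl⟩ ⟨e', he', rfl⟩ hfc)

end IsProperEdgeColoring

variable [Fintype V]

lemma mem_vSpectrum {v : V} {k : ℕ} : k ∈ vSpectrum G c v ↔ ∃ u, G.Adj v u ∧ c s(v, u) = k := by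
  simp [vSpectrum]

lemma vSpectrum_comp (f : ℕ → ℕ) (v : V) :
    vSpectrum G (f ∘ c) v = (vSpectrum G c v).image f := by
  rw [vSpectrum, vSpectrum, image_image]
  rfl

lemma vSpectrum_subset_image_edgeFinset (v : V) : vSpectrum G c v ⊆ G.edgeFinset.image c :=
  fun _ hk =>
    let ⟨_, hu, hcu⟩ := mem_vSpectrum.1 hk
    mem_image.2 ⟨_, G.mem_edgeFinset.2 hu, hcu⟩

lemma colDef_eq_zero_iff : colDef G c = 0 ↔ ∀ v, setDef (vSpectrum G c v) = 0 := by
  simp [colDef, sum_eq_zero_iff]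

namespace IsProperEdgeColoring

lemma card_vSpectrum (hc : IsProperEdgeColoring G c) (v : V) :
    #(vSpectrum G c v) = G.degree v := by
  rw [vSpectrum, card_image_of_injOn, ← G.card_neighborFinset_eq_degree,
    G.neighborFinset_eq_filter]
  intro u hu w hw huw
  by_contra hne
  exact hc.ne_of_adj (mem_filter.1 hu).2 (mem_filter.1 hw).2 hne huw

lemma exists_isPerfectMatching (hc : IsProperEdgeColoring G c) {k : ℕ}
    (hk : ∀ v, k ∈ vSpectrum G c v) : ∃ M : G.Subgraph, M.IsPerfectMatching := by
  refine ⟨(⊤ : G.Subgraph).deleteEdges {e | c e ≠ k},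
    SimpleGraph.Subgraph.isPerfectMatching_iff.2 fun v => ?_⟩
  obtain ⟨u, hu, hcu⟩ := mem_vSpectrum.1 (hk v)
  refine ⟨u, by simpa using ⟨hu, hcu⟩, fun w hw => ?_⟩
  simp only [SimpleGraph.Subgraph.deleteEdges_adj, SimpleGraph.Subgraph.top_adj,
    Set.mem_ofPred_eq, not_not] at hw
  by_contra hwu
  exact hc.ne_of_adj hw.1 hu hwu (hw.2.trans hcu.symm)

end IsProperEdgeColoring

namespace IsProperTEdgeColoring

variable {t : ℕ}

lemma vSpectrum_subset (hc : IsProperTEdgeColoring G t c) (v : V) :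
    vSpectrum G c v ⊆ Icc 1 t := fun _ hk =>
  let ⟨_, hu, hcu⟩ := mem_vSpectrum.1 hk
  hcu ▸ hc.2.1 _ hu

lemma maxDegree_le (hc : IsProperTEdgeColoring G t c) : G.maxDegree ≤ t := by
  refine G.maxDegree_le_of_forall_degree_le t fun v => ?_
  calc G.degree v = #(vSpectrum G c v) := (hc.1.card_vSpectrum v).symm
    _ ≤ #(Icc 1 t) := card_le_card (hc.vSpectrum_subset v)
    _ = t := by simp

lemma two_mul_minDegree_le (hc : IsProperTEdgeColoring G t c) (hdef : colDef G c = 0)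
    (hG : ¬∃ M : G.Subgraph, M.IsPerfectMatching) : 2 * G.minDegree ≤ t := by
  by_contra! ht
  refine hG (hc.1.exists_isPerfectMatching (k := G.minDegree) fun v => ?_)
  refine mem_of_setDef_eq_zero (hc.vSpectrum_subset v) (colDef_eq_zero_iff.1 hdef v) ?_ ht
  exact hc.1.card_vSpectrum v ▸ G.minDegree_le_degree v

end IsProperTEdgeColoring

lemma IntervalColorable.exists_isProperTEdgeColoring (hG : IntervalColorable G) :
    ∃ t c, IsProperTEdgeColoring G t c ∧ colDef G c = 0 := by
  obtain ⟨c, hc, hdef⟩ := hG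
  set U := G.edgeFinset.image c
  have hcU : ∀ e ∈ G.edgeSet, c e ∈ U := fun e he => mem_image_of_mem c (G.mem_edgeFinset.2 he)
  refine ⟨#U, rankIn U ∘ c, ⟨?_, fun e he => rankIn_mem_Icc (hcU e he), fun k hk => ?_⟩, ?_⟩
  · refine hc.comp ((rankIn_strictMonoOn U).injOn.mono ?_)
    rintro _ ⟨e, he, rfl⟩
    exact hcU e he
  · obtain ⟨_, hx, rfl⟩ := mem_image.1 ((image_rankIn U).symm ▸ hk)
    obtain ⟨e, he, rfl⟩ := mem_image.1 hx
    exact ⟨e, G.mem_edgeFinset.1 he, rfl⟩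
  · rw [colDef_eq_zero_iff] at hdef ⊢
    intro v
    rw [vSpectrum_comp]
    exact setDef_image_rankIn (vSpectrum_subset_image_edgeFinset v) (hdef v)

end Coloring

theorem stmt_10 {V : Type*} [Fintype V] (G : SimpleGraph V)
    (h : ¬∃ M : G.Subgraph, M.IsPerfectMatching) (hic : IntervalColorable G) :
    max G.maxDegree (2 * G.minDegree) ≤ wint G := by
  obtain ⟨t₀, c₀, hc₀⟩ := hic.exists_isProperTEdgeColoring
  refine le_csInf ⟨t₀, c₀, hc₀⟩ ?_
  rintro t ⟨c, hc, hdef⟩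
  exact max_le hc.maxDegree_le (hc.two_mul_minDegree_le hdef h)
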